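/- Let 0 < β < 1/2. There is a constant c₁ > 0 such that for every y₀ ∈ V^{-β}(T³) and every t > 0, the time-integral of Φ along the heat flow satisfies |∫₀ᵗ Φ(S(τ;y₀)) dτ| ≤ c₁‖y₀‖_{H^{-β}}, where S(t;y₀) is the solution at time t of the heat equation ∂_t z = Δz on T³ with z(0)=y₀. -/

import Mathlib

open MeasureTheory

noncomputable section

abbrev Z3 := Fin 3 → ℤ
abbrev C3 := Fin 3 → ℂ

/-- squared euclidean norm of a frequency vector -/
def knormSq (k : Z3) : ℝ := ∑ i, ((k i : ℝ))^2

def knorm (k : Z3) : ℝ := Real.sqrt (knormSq k)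

/-- squared Sobolev H^s norm via Fourier coefficients -/
def sobNormSq (s : ℝ) (c : Z3 → C3) : ℝ :=
  ∑' k : Z3, (knorm k) ^ (2*s) * (∑ i, ‖c k i‖ ^ 2)

def sobNorm (s : ℝ) (c : Z3 → C3) : ℝ := Real.sqrt (sobNormSq s c)

def MeanZero (c : Z3 → C3) : Prop := c 0 = 0

def DivFree (c : Z3 → C3) : Prop := ∀ k, (∑ i, (k i : ℂ) * c k i) = 0

def kcross (k : Z3) (v : C3) : C3 :=
  ![ (k 1 : ℂ) * v 2 - (k 2 : ℂ) * v 1,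
     (k 2 : ℂ) * v 0 - (k 0 : ℂ) * v 2,
     (k 0 : ℂ) * v 1 - (k 1 : ℂ) * v 0 ]

/-- Fourier coefficients of curl⁻¹ : (curl⁻¹ω)^(k) = i (k × ω̂(k))/|k|² -/
def curlInv (c : Z3 → C3) : Z3 → C3 :=
  fun k => if k = 0 then 0 else (Complex.I / (knormSq k : ℂ)) • kcross k (c k)

/-- Ψ(y₁,y₂,y₃) = ∫_{T³} (y₁,∇)curl⁻¹y₂ · y₃ dx, written via Fourier series:
the product of three Fourier series integrated over T³ picks out frequencies
k + l + m = 0, with the gradient contributing the factor i·l. -/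
def Psi (c1 c2 c3 : Z3 → C3) : ℂ :=
  (2*Real.pi)^3 * ∑' p : Z3 × Z3,
    (∑ i, c1 p.1 i * (Complex.I * ((p.2 i : ℤ) : ℂ))) *
    (∑ i, curlInv c2 p.2 i * c3 (-(p.1 + p.2)) i)

/-- Φ(u) = Ψ(u,u,u)/∫|u|², with ∫_{T³}|u|² = (2π)³ ∑_k |û(k)|².  Φ(0)=0. -/
def Phi (c : Z3 → C3) : ℂ :=
  if sobNormSq 0 c = 0 then 0
  else Psi c c c / (((2*Real.pi)^3 * sobNormSq 0 c : ℝ) : ℂ)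

/-- heat semigroup S(t;·) on Fourier coefficients -/
def heat (t : ℝ) (c : Z3 → C3) : Z3 → C3 :=
  fun k i => c k i * Complex.exp (-(knormSq k) * t)

/-! Write `a k = |ŷ(k)| e^{-|k|²τ}` for the Fourier amplitudes of `S(τ; y)`. In the Fourier form of
`Ψ(u, u, u)`, a sum over `k + l + m = 0`, the gradient costs a factor `|l|` that `curl⁻¹` gives
back, so `|Ψ(u, u, u)| ≤ 18 (2π)³ ‖a‖_{ℓ¹} ‖a‖_{ℓ²}²`, and dividing by `‖u‖₀² = (2π)³ ‖a‖_{ℓ²}²`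
gives `|Φ(S(τ; y))| ≤ 18 ∑ₖ |ŷ(k)| e^{-|k|²τ}`. Integrating in time yields at most
`18 ∑_{k ≠ 0} |ŷ(k)| / |k|²`, which Cauchy–Schwarz bounds by
`18 (∑_{k ≠ 0} |k|^{2β - 4})^{1/2} ‖y‖_{-β}`; the lattice sum converges because `4 - 2β > 3`. -/

open Set

lemma sq_le_knormSq (k : Z3) (i : Fin 3) : (k i : ℝ) ^ 2 ≤ knormSq k :=
  Finset.single_le_sum (f := fun j => (k j : ℝ) ^ 2) (fun _ _ => sq_nonneg _) (Finset.mem_univ i)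

lemma knormSq_nonneg (k : Z3) : 0 ≤ knormSq k :=
  Finset.sum_nonneg fun _ _ => sq_nonneg _

lemma knormSq_pos {k : Z3} (hk : k ≠ 0) : 0 < knormSq k := by
  obtain ⟨i, hi⟩ : ∃ i, k i ≠ 0 := by
    by_contra! h
    exact hk (funext h)
  have hi' : (k i : ℝ) ≠ 0 := by exact_mod_cast hi
  exact (by positivity : 0 < (k i : ℝ) ^ 2).trans_le (sq_le_knormSq k i)

lemma knorm_nonneg (k : Z3) : 0 ≤ knorm k := Real.sqrt_nonneg _

lemma knorm_pos {k : Z3} (hk : k ≠ 0) : 0 < knorm k := Real.sqrt_pos.mpr (knormSq_pos hk)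

lemma knorm_sq (k : Z3) : knorm k ^ 2 = knormSq k := Real.sq_sqrt (knormSq_nonneg k)

lemma abs_le_knorm (k : Z3) (i : Fin 3) : |(k i : ℝ)| ≤ knorm k := by
  rw [← Real.sqrt_sq_eq_abs]
  exact Real.sqrt_le_sqrt (sq_le_knormSq k i)

lemma knorm_rpow_neg_two (k : Z3) : knorm k ^ (-2 : ℝ) = (knormSq k)⁻¹ := by
  rw [Real.rpow_neg (knorm_nonneg k), Real.rpow_two, knorm_sq]

lemma summable_knorm_rpow_neg {r : ℝ} (hr : 3 < r) :
    Summable fun k : Z3 => knorm k ^ (-r) := by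
  let b := (EuclideanSpace.basisFun (Fin 3) ℝ).toBasis
  let L := Submodule.span ℤ (Set.range b)
  let bL : Module.Basis (Fin 3) ℤ L := b.restrictScalars ℤ
  have hrank : Module.finrank ℤ L = 3 := by simp [Module.finrank_eq_card_basis bL]
  have hL := ZLattice.summable_norm_rpow L (-r) (by rw [hrank]; push_cast; linarith)
  refine ((bL.equivFun.symm.toEquiv.summable_iff).mpr hL).congr fun k => ?_
  have hcoord : ∀ i, ((bL.equivFun.symm k : L) : EuclideanSpace ℝ (Fin 3)) i = k i := by
    intro i
    have hb : ∀ j, (bL j : EuclideanSpace ℝ (Fin 3)) = b j := b.restrictScalars_apply ℤ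
    simp [Module.Basis.equivFun_symm_apply, hb, b, Pi.single_apply]
  simp only [Function.comp_apply, LinearEquiv.coe_toEquiv, Submodule.coe_norm,
    EuclideanSpace.norm_eq, hcoord, Real.norm_eq_abs, sq_abs, knorm, knormSq]

section CauchySchwarz

variable {ι : Type*} {x y : ι → ℝ}

lemma summable_mul_of_summable_sq (hx : Summable fun i => x i ^ 2)
    (hy : Summable fun i => y i ^ 2) : Summable fun i => x i * y i := by
  refine Summable.of_norm_bounded ((hx.add hy).div_const 2) fun i => ?_
  rw [Real.norm_eq_abs, abs_le]
  constructor <;> nlinarith [sq_nonneg (x i + y i), sq_nonneg (x i - y i)]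

lemma tsum_mul_le_sqrt_mul_sqrt (hx : Summable fun i => x i ^ 2)
    (hy : Summable fun i => y i ^ 2) :
    ∑' i, x i * y i ≤ √(∑' i, x i ^ 2) * √(∑' i, y i ^ 2) := by
  refine (summable_mul_of_summable_sq hx hy).tsum_le_of_sum_le fun s => ?_
  refine (Real.sum_mul_le_sqrt_mul_sqrt s x y).trans ?_
  gcongr
  · exact hx.sum_le_tsum s fun i _ => sq_nonneg _
  · exact hy.sum_le_tsum s fun i _ => sq_nonneg _

end CauchySchwarz

lemma summable_sq_of_summable {ι : Type*} {a : ι → ℝ} (ha0 : ∀ i, 0 ≤ a i)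
    (ha : Summable a) : Summable fun i => a i ^ 2 := by
  refine Summable.of_nonneg_of_le (fun i => sq_nonneg _) (fun i => ?_) (ha.mul_left (∑' j, a j))
  rw [sq]
  exact mul_le_mul_of_nonneg_right (ha.le_tsum i fun j _ => ha0 j) (ha0 i)

section TripleProduct

variable {G : Type*} [AddCommGroup G] {a : G → ℝ}

lemma summable_and_tsum_mul_neg_add_le (ha0 : ∀ k, 0 ≤ a k) (ha : Summable a) (k : G) :
    (Summable fun l => a l * a (-(k + l))) ∧ ∑' l, a l * a (-(k + l)) ≤ ∑' j, a j ^ 2 := by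
  let σ : G ≃ G := (Equiv.addLeft k).trans (Equiv.neg G)
  have hsq := summable_sq_of_summable ha0 ha
  have hσsq : Summable fun l => a (σ l) ^ 2 := (σ.summable_iff (f := fun j => a j ^ 2)).mpr hsq
  have hamgm : ∀ l, a l * a (σ l) ≤ (a l ^ 2 + a (σ l) ^ 2) / 2 := fun l => by
    nlinarith [sq_nonneg (a l - a (σ l))]
  have hbound : Summable fun l => (a l ^ 2 + a (σ l) ^ 2) / 2 := (hsq.add hσsq).div_const 2
  have hs : Summable fun l => a l * a (σ l) :=
    hbound.of_nonneg_of_le (fun l => mul_nonneg (ha0 _) (ha0 _)) hamgm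
  refine ⟨hs, (hs.tsum_le_tsum hamgm hbound).trans_eq ?_⟩
  rw [tsum_div_const, hsq.tsum_add hσsq, σ.tsum_eq (f := fun j => a j ^ 2)]
  ring

lemma summable_triple_product (ha0 : ∀ k, 0 ≤ a k) (ha : Summable a) :
    Summable fun p : G × G => a p.1 * (a p.2 * a (-(p.1 + p.2))) := by
  refine Summable.of_nonneg_of_le (fun p => mul_nonneg (ha0 _) (mul_nonneg (ha0 _) (ha0 _)))
    (fun p => ?_) ((ha.mul_of_nonneg ha ha0 ha0).mul_right (∑' j, a j))
  rw [mul_assoc]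
  gcongr
  · exact ha0 _
  · exact ha0 _
  · exact ha.le_tsum _ fun j _ => ha0 j

lemma tsum_triple_product_le (ha0 : ∀ k, 0 ≤ a k) (ha : Summable a) :
    ∑' p : G × G, a p.1 * (a p.2 * a (-(p.1 + p.2))) ≤ (∑' j, a j) * ∑' j, a j ^ 2 := by
  have hfiber := summable_and_tsum_mul_neg_add_le ha0 ha
  rw [(summable_triple_product ha0 ha).tsum_prod' fun k => (hfiber k).1.mul_left (a k),
    ← tsum_mul_right]
  refine Summable.tsum_le_tsum (fun k => ?_) ?_ (ha.mul_right _)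
  · dsimp only
    rw [tsum_mul_left]
    exact mul_le_mul_of_nonneg_left (hfiber k).2 (ha0 k)
  · exact ((summable_triple_product ha0 ha).prod).congr fun k => by simp only [tsum_mul_left]

end TripleProduct

/-- The Euclidean norm on `ℂ³` (the norm instance of `C3 = Fin 3 → ℂ` is the sup norm). -/
def vnorm (v : C3) : ℝ := √(∑ i, ‖v i‖ ^ 2)

lemma vnorm_nonneg (v : C3) : 0 ≤ vnorm v := Real.sqrt_nonneg _

lemma vnorm_sq (v : C3) : vnorm v ^ 2 = ∑ i, ‖v i‖ ^ 2 := Real.sq_sqrt (by positivity)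

lemma norm_le_vnorm (v : C3) (i : Fin 3) : ‖v i‖ ≤ vnorm v :=
  (Real.le_sqrt (norm_nonneg _) (by positivity)).mpr
    (Finset.single_le_sum (f := fun j => ‖v j‖ ^ 2) (fun _ _ => sq_nonneg _) (Finset.mem_univ i))

lemma sobNormSq_zero (c : Z3 → C3) : sobNormSq 0 c = ∑' k, vnorm (c k) ^ 2 := by
  simp [sobNormSq, vnorm_sq]

lemma norm_kcross_le (k : Z3) (v : C3) (i : Fin 3) : ‖kcross k v i‖ ≤ 2 * (knorm k * vnorm v) := by
  have h : ∀ s t, ‖(k s : ℂ) * v t‖ ≤ knorm k * vnorm v := fun s t => by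
    rw [norm_mul, Complex.norm_intCast]
    exact mul_le_mul (abs_le_knorm k s) (norm_le_vnorm v t) (norm_nonneg _) (knorm_nonneg k)
  fin_cases i <;>
    exact (norm_sub_le _ _).trans (by linarith [h 0 1, h 0 2, h 1 0, h 1 2, h 2 0, h 2 1])

lemma norm_curlInv_mul_knorm_le (c : Z3 → C3) (l : Z3) (i : Fin 3) :
    ‖curlInv c l i‖ * knorm l ≤ 2 * vnorm (c l) := by
  by_cases hl : l = 0
  · simp [curlInv, hl, vnorm_nonneg]
  have hq := knormSq_pos hl
  simp only [curlInv, if_neg hl, Pi.smul_apply, smul_eq_mul, norm_mul, norm_div, Complex.norm_I,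
    Complex.norm_real, Real.norm_of_nonneg hq.le]
  calc 1 / knormSq l * ‖kcross l (c l) i‖ * knorm l
      ≤ 1 / knormSq l * (2 * (knorm l * vnorm (c l))) * knorm l := by
        gcongr
        · exact knorm_nonneg l
        · exact norm_kcross_le l (c l) i
    _ = 2 * vnorm (c l) := by
        rw [← knorm_sq]
        field_simp [(knorm_pos hl).ne']

def psiTerm (c1 c2 c3 : Z3 → C3) (p : Z3 × Z3) : ℂ :=
  (∑ i, c1 p.1 i * (Complex.I * ((p.2 i : ℤ) : ℂ))) *
    (∑ i, curlInv c2 p.2 i * c3 (-(p.1 + p.2)) i)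

lemma Psi_eq_tsum_psiTerm (c1 c2 c3 : Z3 → C3) :
    Psi c1 c2 c3 = (2 * Real.pi) ^ 3 * ∑' p, psiTerm c1 c2 c3 p := rfl

/-- The gradient costs a factor `|l|`, which `curl⁻¹` gives back. -/
lemma norm_psiTerm_le (c : Z3 → C3) (k l : Z3) :
    ‖psiTerm c c c (k, l)‖ ≤ 18 * (vnorm (c k) * (vnorm (c l) * vnorm (c (-(k + l))))) := by
  have h₁ : ‖∑ i, c k i * (Complex.I * ((l i : ℤ) : ℂ))‖ ≤ 3 * (vnorm (c k) * knorm l) := by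
    refine (norm_sum_le _ _).trans ((Finset.sum_le_sum (g := fun _ => vnorm (c k) * knorm l)
      fun i _ => ?_).trans_eq (by simp))
    rw [norm_mul, norm_mul, Complex.norm_I, one_mul, Complex.norm_intCast]
    exact mul_le_mul (norm_le_vnorm _ i) (abs_le_knorm l i) (abs_nonneg _) (vnorm_nonneg _)
  have h₂ : knorm l * ‖∑ i, curlInv c l i * c (-(k + l)) i‖ ≤
      3 * (2 * vnorm (c l) * vnorm (c (-(k + l)))) := by
    refine (mul_le_mul_of_nonneg_left (norm_sum_le _ _) (knorm_nonneg l)).trans ?_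
    rw [Finset.mul_sum]
    refine (Finset.sum_le_sum (g := fun _ => 2 * vnorm (c l) * vnorm (c (-(k + l))))
      fun i _ => ?_).trans_eq (by simp)
    rw [norm_mul, ← mul_assoc, mul_comm (knorm l)]
    exact mul_le_mul (norm_curlInv_mul_knorm_le c l i) (norm_le_vnorm _ i) (norm_nonneg _)
      (mul_nonneg zero_le_two (vnorm_nonneg _))
  rw [psiTerm, norm_mul]
  calc _ ≤ 3 * (vnorm (c k) * knorm l) * ‖∑ i, curlInv c l i * c (-(k + l)) i‖ := by gcongr
    _ = 3 * vnorm (c k) * (knorm l * ‖∑ i, curlInv c l i * c (-(k + l)) i‖) := by ring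
    _ ≤ 3 * vnorm (c k) * (3 * (2 * vnorm (c l) * vnorm (c (-(k + l))))) := by
        gcongr
        exact mul_nonneg zero_le_three (vnorm_nonneg _)
    _ = _ := by ring

lemma norm_Psi_le (c : Z3 → C3) (hc : Summable fun k => vnorm (c k)) :
    ‖Psi c c c‖ ≤
      (2 * Real.pi) ^ 3 * (18 * ((∑' k, vnorm (c k)) * ∑' k, vnorm (c k) ^ 2)) := by
  have ha0 : ∀ k, 0 ≤ vnorm (c k) := fun k => vnorm_nonneg _
  have hbound : ∀ p : Z3 × Z3, ‖psiTerm c c c p‖ ≤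
      18 * (vnorm (c p.1) * (vnorm (c p.2) * vnorm (c (-(p.1 + p.2))))) :=
    fun p => norm_psiTerm_le c p.1 p.2
  have hdom := (summable_triple_product ha0 hc).mul_left 18
  have hnorm : Summable fun p => ‖psiTerm c c c p‖ :=
    hdom.of_nonneg_of_le (fun _ => norm_nonneg _) hbound
  rw [Psi_eq_tsum_psiTerm, norm_mul, norm_pow, norm_mul, Complex.norm_two, Complex.norm_real,
    Real.norm_of_nonneg Real.pi_pos.le]
  gcongr
  refine (norm_tsum_le_tsum_norm hnorm).trans ?_
  refine (hnorm.tsum_le_tsum hbound hdom).trans ?_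
  rw [tsum_mul_left]
  gcongr
  exact tsum_triple_product_le ha0 hc

theorem norm_Phi_le (c : Z3 → C3) (hc : Summable fun k => vnorm (c k)) :
    ‖Phi c‖ ≤ 18 * ∑' k, vnorm (c k) := by
  have hsum0 : 0 ≤ ∑' k, vnorm (c k) := tsum_nonneg fun k => vnorm_nonneg _
  unfold Phi
  split_ifs with h
  · simpa using hsum0
  have hD : 0 < (2 * Real.pi) ^ 3 * sobNormSq 0 c := by
    have : 0 ≤ sobNormSq 0 c := (sobNormSq_zero c).symm ▸ tsum_nonneg fun k => sq_nonneg _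
    have := Real.pi_pos
    positivity
  rw [norm_div, Complex.norm_real, Real.norm_of_nonneg hD.le, div_le_iff₀ hD]
  refine (norm_Psi_le c hc).trans_eq ?_
  rw [sobNormSq_zero]
  ring

lemma vnorm_heat (τ : ℝ) (c : Z3 → C3) (k : Z3) :
    vnorm (heat τ c k) = vnorm (c k) * Real.exp (-knormSq k * τ) := by
  have h : ∀ i, ‖heat τ c k i‖ = ‖c k i‖ * Real.exp (-knormSq k * τ) := fun i => by
    rw [heat, norm_mul, Complex.norm_exp]
    norm_cast
  simp only [vnorm, h, mul_pow, ← Finset.sum_mul]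
  rw [Real.sqrt_mul (by positivity), Real.sqrt_sq (Real.exp_pos _).le]

lemma MeanZero.vnorm_heat_zero {c : Z3 → C3} (hmz : MeanZero c) (τ : ℝ) :
    vnorm (heat τ c 0) = 0 := by
  rw [vnorm_heat, show c 0 = 0 from hmz]
  simp [vnorm]

lemma summable_vnorm_heat {c : Z3 → C3} (hmz : MeanZero c)
    (hc : Summable fun k => vnorm (c k) / knormSq k) {τ : ℝ} (hτ : 0 < τ) :
    Summable fun k => vnorm (heat τ c k) := by
  refine (hc.mul_left τ⁻¹).of_nonneg_of_le (fun k => vnorm_nonneg _) fun k => ?_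
  by_cases hk : k = 0
  · subst hk
    rw [hmz.vnorm_heat_zero]
    simp [knormSq]
  have hq := knormSq_pos hk
  have hexp : Real.exp (-(knormSq k * τ)) ≤ (knormSq k * τ)⁻¹ := by
    rw [Real.exp_neg]
    exact inv_anti₀ (by positivity) (by linarith [Real.add_one_le_exp (knormSq k * τ)])
  rw [vnorm_heat, neg_mul]
  calc vnorm (c k) * Real.exp (-(knormSq k * τ)) ≤ vnorm (c k) * (knormSq k * τ)⁻¹ := by
        gcongr
        exact vnorm_nonneg _
    _ = τ⁻¹ * (vnorm (c k) / knormSq k) := by field_simp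

lemma lintegral_vnorm_heat_le {c : Z3 → C3} (hmz : MeanZero c) (k : Z3) (t : ℝ) :
    ∫⁻ τ in Ioc 0 t, ENNReal.ofReal (vnorm (heat τ c k)) ≤
      ENNReal.ofReal (vnorm (c k) / knormSq k) := by
  by_cases hk : k = 0
  · subst hk
    simp [hmz.vnorm_heat_zero]
  have hq := knormSq_pos hk
  simp only [vnorm_heat]
  calc ∫⁻ τ in Ioc 0 t, ENNReal.ofReal (vnorm (c k) * Real.exp (-knormSq k * τ))
      ≤ ∫⁻ τ in Ioi 0, ENNReal.ofReal (vnorm (c k) * Real.exp (-knormSq k * τ)) :=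
        lintegral_mono_set Ioc_subset_Ioi_self
    _ = ENNReal.ofReal (∫ τ in Ioi 0, vnorm (c k) * Real.exp (-knormSq k * τ)) :=
        (ofReal_integral_eq_lintegral_ofReal ((exp_neg_integrableOn_Ioi 0 hq).const_mul _)
          (ae_of_all _ fun τ => mul_nonneg (vnorm_nonneg _) (Real.exp_pos _).le)).symm
    _ = ENNReal.ofReal (vnorm (c k) / knormSq k) := by
        rw [integral_const_mul, integral_exp_mul_Ioi (by linarith) 0]
        congr 1
        field_simp
        simp

theorem norm_integral_Phi_heat_le {c : Z3 → C3} (hmz : MeanZero c)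
    (hc : Summable fun k => vnorm (c k) / knormSq k) (t : ℝ) :
    ‖∫ τ in Ioc 0 t, Phi (heat τ c)‖ ≤ 18 * ∑' k, vnorm (c k) / knormSq k := by
  have hnn : ∀ k, 0 ≤ vnorm (c k) / knormSq k := fun k =>
    div_nonneg (vnorm_nonneg _) (knormSq_nonneg k)
  refine (norm_integral_le_lintegral_norm _).trans
    (ENNReal.toReal_le_of_le_ofReal (mul_nonneg (by norm_num) (tsum_nonneg hnn)) ?_)
  calc ∫⁻ τ in Ioc 0 t, ENNReal.ofReal ‖Phi (heat τ c)‖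
      ≤ ∫⁻ τ in Ioc 0 t, 18 * ∑' k, ENNReal.ofReal (vnorm (heat τ c k)) := by
        refine setLIntegral_mono' measurableSet_Ioc fun τ hτ => ?_
        have hs := summable_vnorm_heat hmz hc hτ.1
        rw [← ENNReal.ofReal_tsum_of_nonneg (fun k => vnorm_nonneg _) hs,
          ← ENNReal.ofReal_ofNat 18, ← ENNReal.ofReal_mul (by norm_num)]
        exact ENNReal.ofReal_le_ofReal (norm_Phi_le _ hs)
    _ = 18 * ∑' k, ∫⁻ τ in Ioc 0 t, ENNReal.ofReal (vnorm (heat τ c k)) := by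
        rw [lintegral_const_mul' _ _ ENNReal.ofNat_ne_top, lintegral_tsum fun k => ?_]
        simp only [vnorm_heat]
        fun_prop
    _ ≤ 18 * ∑' k, ENNReal.ofReal (vnorm (c k) / knormSq k) := by
        gcongr with k
        exact lintegral_vnorm_heat_le hmz k t
    _ = ENNReal.ofReal (18 * ∑' k, vnorm (c k) / knormSq k) := by
        rw [ENNReal.ofReal_mul (by norm_num), ENNReal.ofReal_tsum_of_nonneg hnn hc,
          ENNReal.ofReal_ofNat]

lemma summable_and_tsum_vnorm_div_knormSq_le {β : ℝ} (hβ : β < 1 / 2) {c : Z3 → C3}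
    (hc : Summable fun k => knorm k ^ (2 * -β) * ∑ i, ‖c k i‖ ^ 2) :
    (Summable fun k => vnorm (c k) / knormSq k) ∧
      ∑' k, vnorm (c k) / knormSq k ≤ √(∑' k, knorm k ^ (-(4 - 2 * β))) * sobNorm (-β) c := by
  set x : Z3 → ℝ := fun k => knorm k ^ (-β) * vnorm (c k)
  set y : Z3 → ℝ := fun k => knorm k ^ (β - 2)
  have hx : ∀ k, x k ^ 2 = knorm k ^ (2 * -β) * ∑ i, ‖c k i‖ ^ 2 := fun k => by
    rw [mul_pow, vnorm_sq, ← Real.rpow_mul_natCast (knorm_nonneg k)]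
    push_cast
    ring_nf
  have hy : ∀ k, y k ^ 2 = knorm k ^ (-(4 - 2 * β)) := fun k => by
    rw [← Real.rpow_mul_natCast (knorm_nonneg k)]
    push_cast
    ring_nf
  have hxy : ∀ k, x k * y k = vnorm (c k) / knormSq k := fun k => by
    rw [mul_right_comm, ← Real.rpow_add' (knorm_nonneg k) (by ring_nf; norm_num), div_eq_mul_inv,
      ← knorm_rpow_neg_two]
    ring_nf
  have hx2 : Summable fun k => x k ^ 2 := hc.congr fun k => (hx k).symm
  have hy2 : Summable fun k => y k ^ 2 :=
    (summable_knorm_rpow_neg (by linarith)).congr fun k => (hy k).symm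
  refine ⟨(summable_mul_of_summable_sq hx2 hy2).congr hxy, ?_⟩
  calc ∑' k, vnorm (c k) / knormSq k = ∑' k, x k * y k := tsum_congr fun k => (hxy k).symm
    _ ≤ √(∑' k, x k ^ 2) * √(∑' k, y k ^ 2) := tsum_mul_le_sqrt_mul_sqrt hx2 hy2
    _ = √(∑' k, knorm k ^ (-(4 - 2 * β))) * sobNorm (-β) c := by
        rw [mul_comm, tsum_congr hx, tsum_congr hy, sobNorm, sobNormSq]

theorem stmt1_general (β : ℝ) (hβ : β < 1/2) :
    ∃ c₁ > (0:ℝ), ∀ y₀ : Z3 → C3, DivFree y₀ → MeanZero y₀ →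
      Summable (fun k : Z3 => (knorm k) ^ (2*(-β)) * (∑ i, ‖y₀ k i‖ ^ 2)) →
      ∀ t > (0:ℝ),
        ‖∫ τ in Set.Ioc (0:ℝ) t, Phi (heat τ y₀)‖ ≤ c₁ * sobNorm (-β) y₀ := by
  set Z := ∑' k : Z3, knorm k ^ (-(4 - 2 * β))
  refine ⟨18 * √Z + 1, by positivity, fun y₀ _ hmz hsum t _ => ?_⟩
  obtain ⟨hs, hle⟩ := summable_and_tsum_vnorm_div_knormSq_le hβ hsum
  have hM : 0 ≤ sobNorm (-β) y₀ := Real.sqrt_nonneg _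
  calc ‖∫ τ in Set.Ioc (0:ℝ) t, Phi (heat τ y₀)‖
      ≤ 18 * ∑' k, vnorm (y₀ k) / knormSq k := norm_integral_Phi_heat_le hmz hs t
    _ ≤ 18 * (√Z * sobNorm (-β) y₀) := by gcongr
    _ ≤ (18 * √Z + 1) * sobNorm (-β) y₀ := by nlinarith

/-- for 0 < β < 1/2 there is c₁ > 0 with
|∫₀ᵗ Φ(S(τ;y₀))dτ| ≤ c₁‖y₀‖_{-β} for all y₀ ∈ V^{-β} and t > 0. -/
theorem stmt1 (β : ℝ) (hβ0 : 0 < β) (hβ : β < 1/2) :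
    ∃ c₁ > (0:ℝ), ∀ y₀ : Z3 → C3, DivFree y₀ → MeanZero y₀ →
      Summable (fun k : Z3 => (knorm k) ^ (2*(-β)) * (∑ i, ‖y₀ k i‖ ^ 2)) →
      ∀ t > (0:ℝ),
        ‖∫ τ in Set.Ioc (0:ℝ) t, Phi (heat τ y₀)‖ ≤ c₁ * sobNorm (-β) y₀ :=
  stmt1_general β hβ
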